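/- Every traceless complex square matrix is unitarily similar to a hollow matrix, i.e., if A is an n×n complex matrix with trace zero, then there exists a unitary matrix U such that all diagonal entries of U* A U vanish. -/

import Mathlib

/-!
The diagonal entry `(Uᴴ * A * U) i i` is the value `star x ⬝ᵥ A *ᵥ x` at the `i`-th column `x`
of `U`, and a Householder reflection realises any unit vector with real `i`-th coordinate as that
column while fixing every basis vector orthogonal to it.

On the unit vectors `cos θ • eᵢ + exp (ψ I) sin θ • eⱼ`, first choose the phase `ψ` so that the
cross term is a real multiple of `A i i - A j j`, then `θ` by the intermediate value theorem: this
hits every point of the segment `[A i i, A j j]` (Toeplitz–Hausdorff for `2 × 2` matrices).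
Iterating along a finite set `S` of indices reaches every point of the convex hull of
`{A k k | k ∈ S}` while leaving the other diagonal entries alone. If these entries sum to zero, their
mean `0` lies in the hull, so one of them can be made zero; by unitary invariance of the trace the
others still sum to zero, and we induct on `S`.
-/

open Matrix Complex ComplexConjugate
open scoped ComplexOrder

section Householder

variable {𝕜 : Type*} [RCLike 𝕜] {n : Type*} [Fintype n] [DecidableEq n]

/-- Reflection in the hyperplane orthogonal to `w`; `householder 0 = 1` since `2 / 0 = 0`. -/
noncomputable def householder (w : n → 𝕜) : Matrix n n 𝕜 :=
  1 - (2 / (star w ⬝ᵥ w)) • vecMulVec w (star w)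

lemma conjTranspose_householder (w : n → 𝕜) : (householder w)ᴴ = householder w := by
  simp [householder, conjTranspose_vecMulVec, ← star_dotProduct]

lemma householder_mul_self (w : n → 𝕜) : householder w * householder w = 1 := by
  by_cases hw : w = 0
  · simp [householder, hw]
  have hs : star w ⬝ᵥ w ≠ 0 := by simpa using hw
  have hP : vecMulVec w (star w) * vecMulVec w (star w) =
      (star w ⬝ᵥ w) • vecMulVec w (star w) := by
    rw [vecMulVec_mul_vecMulVec, vecMulVec_smul]
  have hc : 2 / (star w ⬝ᵥ w) * (2 / (star w ⬝ᵥ w) * (star w ⬝ᵥ w)) =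
      2 / (star w ⬝ᵥ w) + 2 / (star w ⬝ᵥ w) := by
    field_simp; ring
  simp only [householder, sub_mul, mul_sub, Matrix.one_mul, Matrix.mul_one, Matrix.smul_mul,
    Matrix.mul_smul, hP, smul_smul, hc, add_smul]
  abel

lemma householder_mem_unitaryGroup (w : n → 𝕜) : householder w ∈ unitaryGroup n 𝕜 := by
  rw [mem_unitaryGroup_iff', star_eq_conjTranspose, conjTranspose_householder,
    householder_mul_self]

lemma householder_mulVec (w v : n → 𝕜) :
    householder w *ᵥ v = v - (2 / (star w ⬝ᵥ w) * (star w ⬝ᵥ v)) • w := by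
  simp only [householder, sub_mulVec, one_mulVec, smul_mulVec, vecMulVec_mulVec, op_smul_eq_smul,
    smul_smul]

lemma householder_sub_mulVec {x y : n → 𝕜} (hx : star x ⬝ᵥ x = 1) (hy : star y ⬝ᵥ y = 1)
    (hxy : star (star y ⬝ᵥ x) = star y ⬝ᵥ x) : householder (y - x) *ᵥ y = x := by
  have hyx : star x ⬝ᵥ y = star y ⬝ᵥ x := by rw [star_dotProduct, hxy]
  have hww : star (y - x) ⬝ᵥ (y - x) = 2 * (1 - star y ⬝ᵥ x) := by
    simp only [star_sub, sub_dotProduct, dotProduct_sub, hx, hy, hyx]; ring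
  have hwy : star (y - x) ⬝ᵥ y = 1 - star y ⬝ᵥ x := by
    simp only [star_sub, sub_dotProduct, hy, hyx]
  rw [householder_mulVec, hww, hwy]
  by_cases h1 : 1 - star y ⬝ᵥ x = 0
  · have hw0 : y - x = 0 := by rw [← dotProduct_star_self_eq_zero, hww, h1, mul_zero]
    rw [h1, mul_zero, zero_smul, sub_zero, sub_eq_zero.mp hw0]
  · rw [div_mul_eq_mul_div, div_self (mul_ne_zero two_ne_zero h1), one_smul, sub_sub_cancel]

end Householder

variable {n : Type*} [Fintype n]

lemma conjTranspose_mul_mul_mul_eq {R : Type*} [Semiring R] [StarRing R]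
    (A U V : Matrix n n R) : (U * V)ᴴ * A * (U * V) = Vᴴ * (Uᴴ * A * U) * V := by
  simp only [conjTranspose_mul, Matrix.mul_assoc]

lemma exists_phase_mul_conj_im_eq_zero (b c z : ℂ) :
    ∃ ψ : ℝ, ((cexp (ψ * I) * b + cexp (-(ψ * I)) * c) * conj z).im = 0 := by
  set f : ℝ → ℝ := fun ψ => ((cexp (ψ * I) * b + cexp (-(ψ * I)) * c) * conj z).im
  have hf : Continuous f := by fun_prop
  have hπ : f Real.pi = -f 0 := by
    simp only [f, ofReal_zero, zero_mul, Complex.exp_zero, Complex.exp_neg, exp_pi_mul_I, inv_neg,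
      inv_one, one_mul, ← neg_add, neg_mul, neg_im]
  have h0 : (0 : ℝ) ∈ Set.uIcc (f 0) (f Real.pi) := by
    rw [hπ]; rcases le_total 0 (f 0) with h | h <;> simp [h]
  obtain ⟨ψ, -, hψ⟩ := intermediate_value_uIcc hf.continuousOn h0
  exact ⟨ψ, hψ⟩

lemma exists_eq_ofReal_mul_of_im_mul_conj_eq_zero {w z : ℂ} (hz : z ≠ 0)
    (h : (w * conj z).im = 0) : ∃ r : ℝ, w = r * z := by
  refine ⟨(w * conj z).re / normSq z, ?_⟩
  have hreal : w * conj z = ((w * conj z).re : ℂ) := Complex.ext rfl (by simpa using h)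
  have hns : (normSq z : ℂ) ≠ 0 := by exact_mod_cast (normSq_pos.mpr hz).ne'
  rw [ofReal_div, ← hreal, div_mul_eq_mul_div, eq_div_iff hns, mul_assoc, mul_comm (conj z),
    mul_conj]

lemma exists_cos_sq_add_mul_cos_mul_sin_eq (r : ℝ) {s : ℝ} (hs : s ∈ Set.Icc 0 1) :
    ∃ θ : ℝ, Real.cos θ ^ 2 + r * (Real.cos θ * Real.sin θ) = s := by
  let g : ℝ → ℝ := fun θ => Real.cos θ ^ 2 + r * (Real.cos θ * Real.sin θ)
  have h : s ∈ Set.Icc (g (Real.pi / 2)) (g 0) := by simpa [g] using hs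
  obtain ⟨θ, -, hθ⟩ :=
    intermediate_value_Icc' (by positivity) (by fun_prop : Continuous g).continuousOn h
  exact ⟨θ, hθ⟩

variable [DecidableEq n]

lemma conjTranspose_mul_mul_apply_self {R : Type*} [Semiring R] [StarRing R]
    (U A : Matrix n n R) (k : n) :
    (Uᴴ * A * U) k k = star (U *ᵥ Pi.single k 1) ⬝ᵥ A *ᵥ (U *ᵥ Pi.single k 1) := by
  rw [star_mulVec, ← dotProduct_mulVec, mulVec_mulVec, mulVec_mulVec, Pi.star_single, star_one,
    single_one_dotProduct, mulVec_single_one, Matrix.mul_assoc]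
  rfl

lemma exists_unitary_diag_eq_dotProduct_mulVec {𝕜 : Type*} [RCLike 𝕜] (A : Matrix n n 𝕜)
    {x : n → 𝕜} {i : n} (hx : star x ⬝ᵥ x = 1) (hxi : star (x i) = x i) :
    ∃ U ∈ unitaryGroup n 𝕜, (Uᴴ * A * U) i i = star x ⬝ᵥ A *ᵥ x ∧
      ∀ k ≠ i, x k = 0 → (Uᴴ * A * U) k k = A k k := by
  refine ⟨householder (Pi.single i 1 - x), householder_mem_unitaryGroup _, ?_,
    fun k hki hxk => ?_⟩
  · rw [conjTranspose_mul_mul_apply_self,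
      householder_sub_mulVec hx (by simp) (by simpa using hxi)]
  · have hcol : householder (Pi.single i 1 - x) *ᵥ Pi.single k 1 = Pi.single k 1 := by
      rw [householder_mulVec]
      simp [hki, hxk]
    rw [conjTranspose_mul_mul_apply_self, hcol]
    simp

lemma dotProduct_mulVec_single_add_single {R : Type*} [CommSemiring R] [StarRing R]
    (A : Matrix n n R) (i j : n) (p q : R) :
    star (Pi.single i p + Pi.single j q) ⬝ᵥ A *ᵥ (Pi.single i p + Pi.single j q) =
      star p * p * A i i + star p * q * A i j + star q * p * A j i + star q * q * A j j := by
  simp only [star_add, Pi.star_single, mulVec_add, mulVec_single, dotProduct_add, add_dotProduct,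
    single_dotProduct, op_smul_eq_smul, Pi.smul_apply, col_apply, smul_eq_mul]
  ring

lemma exists_dotProduct_mulVec_eq_of_mem_segment (A : Matrix n n ℂ) {i j : n} (hij : i ≠ j)
    {t : ℂ} (ht : t ∈ segment ℝ (A i i) (A j j)) :
    ∃ x : n → ℂ, star x ⬝ᵥ x = 1 ∧ star (x i) = x i ∧ (∀ k, k ≠ i → k ≠ j → x k = 0) ∧
      star x ⬝ᵥ A *ᵥ x = t := by
  rw [segment_eq_image] at ht
  obtain ⟨u, hu, rfl⟩ := ht
  simp only [real_smul, ofReal_sub, ofReal_one]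
  by_cases had : A i i = A j j
  · refine ⟨Pi.single i 1, by simp, by simp, fun k hki _ => by simp [hki], ?_⟩
    rw [← had, ← add_mul, sub_add_cancel, one_mul]
    simp
  obtain ⟨ψ, hψ⟩ := exists_phase_mul_conj_im_eq_zero (A i j) (A j i) (A i i - A j j)
  obtain ⟨r, hr⟩ := exists_eq_ofReal_mul_of_im_mul_conj_eq_zero (sub_ne_zero.mpr had) hψ
  obtain ⟨θ, hθ⟩ := exists_cos_sq_add_mul_cos_mul_sin_eq r (s := 1 - u)
    ⟨by linarith [hu.2], by linarith [hu.1]⟩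
  have hθ' : (Real.cos θ : ℂ) ^ 2 + r * ((Real.cos θ : ℂ) * Real.sin θ) = 1 - u := by
    exact_mod_cast hθ
  have hpyth : (Real.sin θ : ℂ) ^ 2 + (Real.cos θ : ℂ) ^ 2 = 1 := by
    exact_mod_cast Real.sin_sq_add_cos_sq θ
  have hζ : star (cexp (ψ * I)) = cexp (-(ψ * I)) := by
    rw [Complex.star_def, ← Complex.exp_conj]; simp
  have hζζ : cexp (-(ψ * I)) * cexp (ψ * I) = 1 := by
    rw [← Complex.exp_add, neg_add_cancel, Complex.exp_zero]
  have hcos : star (Real.cos θ : ℂ) = Real.cos θ := conj_ofReal _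
  have hsin : star (Real.sin θ : ℂ) = Real.sin θ := conj_ofReal _
  refine ⟨Pi.single i (Real.cos θ : ℂ) + Pi.single j (cexp (ψ * I) * Real.sin θ), ?_, ?_, ?_, ?_⟩
  · have h := dotProduct_mulVec_single_add_single (1 : Matrix n n ℂ) i j
      (Real.cos θ : ℂ) (cexp (ψ * I) * Real.sin θ)
    rw [one_mulVec] at h
    rw [h, one_apply_eq, one_apply_eq, one_apply_ne hij, one_apply_ne hij.symm, star_mul', hζ,
      hcos, hsin]
    linear_combination (Real.sin θ : ℂ) ^ 2 * hζζ + hpyth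
  · rw [Pi.add_apply, Pi.single_eq_same, Pi.single_eq_of_ne hij, add_zero, hcos]
  · intro k hki hkj
    simp [hki, hkj]
  · rw [dotProduct_mulVec_single_add_single, star_mul', hζ, hcos, hsin]
    linear_combination (Real.cos θ * Real.sin θ : ℂ) * hr + (Real.sin θ ^ 2 * A j j : ℂ) * hζζ
      + (A i i - A j j) * hθ' + A j j * hpyth

lemma exists_unitary_diag_eq_of_mem_segment (A : Matrix n n ℂ) {i j : n} (hij : i ≠ j) {t : ℂ}
    (ht : t ∈ segment ℝ (A i i) (A j j)) :
    ∃ U ∈ unitaryGroup n ℂ, (Uᴴ * A * U) i i = t ∧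
      ∀ k, k ≠ i → k ≠ j → (Uᴴ * A * U) k k = A k k := by
  obtain ⟨x, hx, hxi, hsupp, rfl⟩ := exists_dotProduct_mulVec_eq_of_mem_segment A hij ht
  obtain ⟨U, hU, hUi, hUk⟩ := exists_unitary_diag_eq_dotProduct_mulVec A hx hxi
  exact ⟨U, hU, hUi, fun k hki hkj => hUk k hki (hsupp k hki hkj)⟩

lemma exists_unitary_diag_eq_of_mem_convexHull (A : Matrix n n ℂ) (S : Finset n) {z : ℂ}
    (hz : z ∈ convexHull ℝ ((fun k => A k k) '' S)) :
    ∃ U ∈ unitaryGroup n ℂ, (∃ i ∈ S, (Uᴴ * A * U) i i = z) ∧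
      ∀ k ∉ S, (Uᴴ * A * U) k k = A k k := by
  induction S using Finset.induction_on generalizing z with
  | empty => simp at hz
  | insert j T hjT ih =>
    rcases T.eq_empty_or_nonempty with rfl | hT
    · refine ⟨1, one_mem _, ⟨j, by simp, ?_⟩, fun k _ => by simp⟩
      simpa [eq_comm] using hz
    rw [Finset.coe_insert, Set.image_insert_eq,
      convexHull_insert ((Finset.coe_nonempty.mpr hT).image _), mem_convexJoin] at hz
    obtain ⟨_, rfl, y, hy, hzy⟩ := hz
    obtain ⟨U, hU, ⟨i, hiT, hUi⟩, hUout⟩ := ih hy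
    have hij : i ≠ j := fun h => hjT (h ▸ hiT)
    have hzB : z ∈ segment ℝ ((Uᴴ * A * U) i i) ((Uᴴ * A * U) j j) := by
      rwa [hUi, hUout j hjT, segment_symm]
    obtain ⟨V, hV, hVi, hVout⟩ := exists_unitary_diag_eq_of_mem_segment _ hij hzB
    refine ⟨U * V, mul_mem hU hV, ⟨i, Finset.mem_insert_of_mem hiT, ?_⟩, fun k hk => ?_⟩
    · rw [conjTranspose_mul_mul_mul_eq, hVi]
    · rw [Finset.mem_insert, not_or] at hk
      rw [conjTranspose_mul_mul_mul_eq, hVout k (fun h => hk.2 (h ▸ hiT)) hk.1, hUout k hk.2]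

lemma sum_diag_conj_eq_of_diag_eq_of_notMem {A U : Matrix n n ℂ} (hU : U ∈ unitaryGroup n ℂ)
    {S : Finset n} (h : ∀ k ∉ S, (Uᴴ * A * U) k k = A k k) :
    ∑ k ∈ S, (Uᴴ * A * U) k k = ∑ k ∈ S, A k k := by
  have htrace : (Uᴴ * A * U).trace = A.trace := by
    rw [trace_mul_comm, ← Matrix.mul_assoc, ← star_eq_conjTranspose,
      mem_unitaryGroup_iff.mp hU, Matrix.one_mul]
  have hcompl : ∑ k ∈ Sᶜ, (Uᴴ * A * U) k k = ∑ k ∈ Sᶜ, A k k :=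
    Finset.sum_congr rfl fun k hk => h k (Finset.mem_compl.mp hk)
  have hB := Finset.sum_add_sum_compl S fun k => (Uᴴ * A * U) k k
  have hA := Finset.sum_add_sum_compl S fun k => A k k
  simp only [trace, diag] at htrace
  linear_combination hB - hA - hcompl + htrace

lemma exists_unitary_diag_eq_zero_on (A : Matrix n n ℂ) (S : Finset n)
    (hS : ∑ k ∈ S, A k k = 0) :
    ∃ U ∈ unitaryGroup n ℂ, (∀ k ∈ S, (Uᴴ * A * U) k k = 0) ∧
      ∀ k ∉ S, (Uᴴ * A * U) k k = A k k := by
  induction S using Finset.strongInduction generalizing A with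
  | H S ih =>
    rcases S.eq_empty_or_nonempty with rfl | hS0
    · exact ⟨1, one_mem _, by simp, fun k _ => by simp⟩
    have hmean : (0 : ℂ) ∈ convexHull ℝ ((fun k => A k k) '' S) := by
      have h := S.centerMass_mem_convexHull (w := fun _ => (1 : ℝ)) (z := fun k => A k k)
        (fun _ _ => zero_le_one) (by simpa using hS0) (fun k hk => Set.mem_image_of_mem _ hk)
      simpa [Finset.centerMass, hS] using h
    obtain ⟨U, hU, ⟨i, hiS, hUi⟩, hUout⟩ := exists_unitary_diag_eq_of_mem_convexHull A S hmean
    have hsum : ∑ k ∈ S.erase i, (Uᴴ * A * U) k k = 0 := by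
      have h := sum_diag_conj_eq_of_diag_eq_of_notMem hU hUout
      rwa [hS, ← Finset.add_sum_erase S _ hiS, hUi, zero_add] at h
    obtain ⟨V, hV, hVS, hVout⟩ := ih (S.erase i) (Finset.erase_ssubset hiS) _ hsum
    refine ⟨U * V, mul_mem hU hV, fun k hk => ?_, fun k hk => ?_⟩
    · rw [conjTranspose_mul_mul_mul_eq]
      rcases eq_or_ne k i with rfl | hki
      · rw [hVout k (Finset.notMem_erase k S), hUi]
      · exact hVS k (Finset.mem_erase.mpr ⟨hki, hk⟩)
    · rw [conjTranspose_mul_mul_mul_eq, hVout k (fun h => hk (Finset.mem_of_mem_erase h)),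
        hUout k hk]

theorem traceless_unitarily_similar_to_hollow (n : ℕ)
    (A : Matrix (Fin n) (Fin n) ℂ) (hA : A.trace = 0) :
    ∃ U ∈ Matrix.unitaryGroup (Fin n) ℂ,
      ∀ i : Fin n, (Uᴴ * A * U) i i = 0 := by
  obtain ⟨U, hU, hzero, -⟩ := exists_unitary_diag_eq_zero_on A Finset.univ hA
  exact ⟨U, hU, fun i => hzero i (Finset.mem_univ i)⟩
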